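/- arXiv:2204.08456 — 3 statements merged into one kernel-verified Lean document; each statement's English description precedes it below -/
import Mathlib

section
/- There exists a constant C depending only on d̄ such that for every integer N ≥ 2|d̄|, all 0 ≤ S ≤ T ≤ 1, all x, y ∈ 𝕋_N, and every real ν ∈ [0,1], one has N^ν · (T−S)^{ν/2} · H^N_{S,T,x,y} ≤ C. -/
open MeasureTheory

/-- The generator matrix `L_N` of the discrete heat flow with drift: acting on a function
`φ : ZMod N → ℝ` (as `mulVec`), it gives
`L_N φ (x) = (N²/2)(φ(x+1) + φ(x−1) − 2φ(x)) + d̄·N·(φ(x−1) − φ(x))`. -/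
noncomputable def genMat (N : ℕ) (dbar : ℝ) : Matrix (ZMod N) (ZMod N) ℝ :=
  Matrix.of fun x y =>
    ((N : ℝ) ^ 2 / 2) * ((if y = x + 1 then 1 else 0) + (if y = x - 1 then 1 else 0))
      + dbar * (N : ℝ) * (if y = x - 1 then 1 else 0)
      - ((N : ℝ) ^ 2 + dbar * (N : ℝ)) * (if y = x then 1 else 0)

/-- The discrete heat kernel `H^N_{S,T,x,y}`: the `(x,y)` entry of `exp((T−S)·L_N)`. -/
noncomputable def heatKer (N : ℕ) [NeZero N] (dbar : ℝ) (S T : ℝ) (x y : ZMod N) : ℝ :=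
  NormedSpace.exp ((T - S) • genMat N dbar) x y

/-! The generator is circulant, so the discrete Fourier transform diagonalises it, with
eigenvalues of real part `(N² + d̄N)(cos (2πk/N) - 1) ≤ 0`, and `N ≥ 2|d̄|` gives
`N² + d̄N ≥ N²/2`. Hence `H_t(x,y) ≤ N⁻¹ ∑_k exp (t Re λ_k)`. Each term is at most `1`, so `H ≤ 1`;
and by `1 - cos θ ≥ 2θ²/π²`, after folding `k` onto `N - k`, the sum is at most
`∑_j 2/(1 + 2√t j)²`, which telescopes to `O(1 + t^{-1/2})`, so `N √t H` is bounded.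
Interpolating between the two bounds gives every `ν ∈ [0,1]`. -/

lemma Matrix.map_exp {m 𝔸 𝔹 : Type*} [Fintype m] [DecidableEq m] [NormedRing 𝔸] [NormedRing 𝔹]
    [NormedAlgebra ℚ 𝔸] [Algebra ℚ 𝔹] [CompleteSpace 𝔸]
    (f : 𝔸 →+* 𝔹) (hf : Continuous f) (A : Matrix m m 𝔸) :
    (NormedSpace.exp A).map f = NormedSpace.exp (A.map f) := by
  -- any submultiplicative norm will do: `NormedSpace.exp` does not depend on it
  let : NormedRing (Matrix m m 𝔸) := Matrix.linftyOpNormedRing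
  let : NormedRing (Matrix m m 𝔹) := Matrix.linftyOpNormedRing
  let : NormedAlgebra ℚ (Matrix m m 𝔸) := Matrix.linftyOpNormedAlgebra
  have : @CompleteSpace (Matrix m m 𝔸) PseudoMetricSpace.toUniformSpace :=
    (inferInstance : CompleteSpace (m → m → 𝔸))
  exact NormedSpace.map_exp f.mapMatrix (continuous_id.matrix_map hf) A

namespace DiscreteHeat

open Finset Real

lemma exp_neg_sq_le_two_div_one_add_sq {y : ℝ} (hy : 0 ≤ y) :
    exp (-y ^ 2) ≤ 2 / (1 + y) ^ 2 := by
  rw [exp_neg, ← one_div, div_le_div_iff₀ (by positivity) (by positivity)]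
  nlinarith [add_one_le_exp (y ^ 2), sq_nonneg (1 - y)]

lemma sum_range_inv_one_add_mul_sq_le {b : ℝ} (hb : 0 < b) (M : ℕ) :
    ∑ j ∈ range (M + 1), ((1 + b * j) ^ 2)⁻¹ ≤ 1 + b⁻¹ - (b * (1 + b * M))⁻¹ := by
  induction M with
  | zero => simp
  | succ M ih =>
    have hM : (0 : ℝ) ≤ M := M.cast_nonneg
    have telescope : (b * (1 + b * M))⁻¹ - (b * (1 + b * (M + 1)))⁻¹
        = ((1 + b * M) * (1 + b * (M + 1)))⁻¹ := by
      field_simp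
      ring
    have step : ((1 + b * (M + 1)) ^ 2)⁻¹ ≤ ((1 + b * M) * (1 + b * (M + 1)))⁻¹ :=
      inv_anti₀ (by positivity) (by rw [sq]; gcongr; linarith)
    rw [sum_range_succ]
    push_cast
    linarith

lemma half_sq_le_sq_add_mul {n dbar : ℝ} (hn : 2 * |dbar| ≤ n) : n ^ 2 / 2 ≤ n ^ 2 + dbar * n := by
  nlinarith [neg_abs_le dbar, abs_nonneg dbar]

lemma exp_mul_cos_sub_one_le {N m : ℕ} {s c : ℝ} (hN : 0 < N) (hs : 0 ≤ s) (hm : 2 * m ≤ N)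
    (hc : s ^ 2 * N ^ 2 / 2 ≤ c) :
    exp (c * (cos (2 * π * m / N) - 1)) ≤ 2 / (1 + 2 * s * m) ^ 2 := by
  have hNpos : (0 : ℝ) < N := by exact_mod_cast hN
  set θ := 2 * π * m / N
  have hθ : |θ| ≤ π := by
    rw [abs_of_nonneg (by positivity), div_le_iff₀ hNpos]
    have : (2 * m : ℝ) ≤ N := by exact_mod_cast hm
    nlinarith [pi_pos]
  have hcos : 8 * m ^ 2 / N ^ 2 ≤ 1 - cos θ := by
    have := cos_le_one_sub_mul_cos_sq hθ
    have hval : 2 / π ^ 2 * θ ^ 2 = 8 * m ^ 2 / N ^ 2 := by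
      simp only [θ]
      field_simp
      ring
    linarith
  have hexponent : c * (cos θ - 1) ≤ -(2 * s * m) ^ 2 := by
    have := mul_le_mul hc hcos (by positivity) (le_trans (by positivity) hc)
    have hval : s ^ 2 * N ^ 2 / 2 * (8 * m ^ 2 / N ^ 2) = (2 * s * m) ^ 2 := by
      field_simp
      ring
    nlinarith
  exact (exp_le_exp.mpr hexponent).trans (exp_neg_sq_le_two_div_one_add_sq (by positivity))

lemma exp_mul_cos_sub_one_le_add {N j : ℕ} {s c : ℝ} (hN : 0 < N) (hs : 0 ≤ s) (hj : j ≤ N)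
    (hc : s ^ 2 * N ^ 2 / 2 ≤ c) :
    exp (c * (cos (2 * π * j / N) - 1))
      ≤ 2 / (1 + 2 * s * j) ^ 2 + 2 / (1 + 2 * s * (N - j : ℕ)) ^ 2 := by
  rcases le_total (2 * j) N with h | h
  · have := exp_mul_cos_sub_one_le hN hs h hc
    have : 0 ≤ 2 / (1 + 2 * s * (N - j : ℕ)) ^ 2 := by positivity
    linarith
  · have hreflect : cos (2 * π * j / N) = cos (2 * π * (N - j : ℕ) / N) := by
      have hNpos : (N : ℝ) ≠ 0 := by positivity
      rw [Nat.cast_sub hj, ← cos_two_pi_sub]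
      congr 1
      field_simp
    have := exp_mul_cos_sub_one_le hN hs (by omega : 2 * (N - j) ≤ N) hc
    have : 0 ≤ 2 / (1 + 2 * s * j) ^ 2 := by positivity
    rw [hreflect]
    linarith

lemma sum_range_exp_mul_cos_sub_one_le {N : ℕ} {s c : ℝ} (hN : 0 < N) (hs : 0 < s)
    (hc : s ^ 2 * N ^ 2 / 2 ≤ c) :
    ∑ j ∈ range N, exp (c * (cos (2 * π * j / N) - 1)) ≤ 4 + 2 / s := by
  set g : ℕ → ℝ := fun m => 2 / (1 + 2 * s * m) ^ 2
  have hg : ∀ m, 0 ≤ g m := fun m => by positivity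
  have hpointwise : ∑ j ∈ range N, exp (c * (cos (2 * π * j / N) - 1))
      ≤ ∑ j ∈ range N, g j + ∑ j ∈ range N, g (j + 1) := by
    have hreflect : ∑ j ∈ range N, g (N - j) = ∑ j ∈ range N, g (j + 1) := by
      rw [← sum_range_reflect]
      exact sum_congr rfl fun j hj => congrArg g (by have := mem_range.mp hj; omega)
    rw [← hreflect, ← sum_add_distrib]
    exact sum_le_sum fun j hj => exp_mul_cos_sub_one_le_add hN hs.le (mem_range.mp hj).le hc
  have htail : ∑ j ∈ range (N + 1), g j ≤ 2 + s⁻¹ := by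
    have hsum := sum_range_inv_one_add_mul_sq_le (by positivity : 0 < 2 * s) N
    have hrest : 0 ≤ (2 * s * (1 + 2 * s * N))⁻¹ := by positivity
    have hhalf : (2 * s)⁻¹ = s⁻¹ / 2 := by rw [mul_inv]; ring
    simp only [g, div_eq_mul_inv, ← mul_sum]
    linarith
  have h1 := sum_range_succ g N
  have h2 := sum_range_succ' g N
  have := hg N
  have := hg 0
  rw [div_eq_mul_inv]
  linarith

lemma rpow_mul_le_of_mul_le {a h C ν : ℝ} (ha : 0 ≤ a) (hh : h ≤ 1) (hah : a * h ≤ C)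
    (hC : 1 ≤ C) (hν : ν ∈ Set.Icc (0 : ℝ) 1) : a ^ ν * h ≤ C := by
  obtain ⟨hν0, hν1⟩ := hν
  rcases le_or_gt h 0 with hneg | hpos
  · nlinarith [Real.rpow_nonneg ha ν]
  rcases le_or_gt a 1 with ha1 | ha1
  · nlinarith [Real.rpow_le_one ha ha1 hν0]
  · have : a ^ ν ≤ a := by simpa using Real.rpow_le_rpow_of_exponent_le ha1.le hν1
    nlinarith

section Fourier

open Matrix

variable {N : ℕ} [NeZero N]

noncomputable def dftMat (N : ℕ) [NeZero N] : Matrix (ZMod N) (ZMod N) ℂ :=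
  of fun x k => ZMod.stdAddChar (x * k)

lemma dftMat_mul_conjTranspose : dftMat N * (dftMat N)ᴴ = (N : ℂ) • 1 := by
  ext x y
  have hchar (k : ZMod N) : ZMod.stdAddChar (x * k) * star (ZMod.stdAddChar (y * k))
      = ZMod.stdAddChar (k * (x - y)) := by
    rw [Complex.star_def, ← AddChar.map_neg_eq_conj, ← AddChar.map_add_eq_mul]
    ring_nf
  simp only [mul_apply, conjTranspose_apply, dftMat, of_apply, hchar,
    AddChar.sum_mulShift _ (ZMod.isPrimitive_stdAddChar N), sub_eq_zero, Matrix.smul_apply,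
    one_apply, ZMod.card]
  split_ifs <;> simp

lemma dftMat_mul_smul_conjTranspose : dftMat N * ((N : ℂ)⁻¹ • (dftMat N)ᴴ) = 1 := by
  rw [Matrix.mul_smul, dftMat_mul_conjTranspose, smul_smul, inv_mul_cancel₀ (NeZero.ne _),
    one_smul]

lemma inv_dftMat : (dftMat N)⁻¹ = (N : ℂ)⁻¹ • (dftMat N)ᴴ :=
  inv_eq_right_inv dftMat_mul_smul_conjTranspose

lemma isUnit_dftMat : IsUnit (dftMat N) :=
  (isUnit_iff_isUnit_det _).mpr (isUnit_det_of_right_inverse dftMat_mul_smul_conjTranspose)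

noncomputable def genEigval (N : ℕ) [NeZero N] (dbar : ℝ) (k : ZMod N) : ℂ :=
  ((N : ℂ) ^ 2 / 2) * (ZMod.stdAddChar k + ZMod.stdAddChar (-k) - 2)
    + (dbar : ℂ) * N * (ZMod.stdAddChar (-k) - 1)

lemma genMat_map_mul_dftMat (dbar : ℝ) :
    (genMat N dbar).map (algebraMap ℝ ℂ) * dftMat N = dftMat N * diagonal (genEigval N dbar) := by
  ext x k
  have hentry (y : ZMod N) : (genMat N dbar).map (algebraMap ℝ ℂ) x y
      = (N ^ 2 / 2 : ℂ) * ((if y = x + 1 then 1 else 0) + (if y = x + -1 then 1 else 0))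
        + dbar * N * (if y = x + -1 then 1 else 0)
        - (N ^ 2 + dbar * N) * (if y = x then 1 else 0) := by
    simp only [genMat, map_apply, of_apply, Complex.coe_algebraMap, ← sub_eq_add_neg]
    split_ifs <;> simp
  rw [mul_diagonal, mul_apply]
  simp only [hentry, dftMat, of_apply, genEigval, add_mul, sub_mul, mul_assoc, ite_mul, one_mul,
    zero_mul, sum_add_distrib, sum_sub_distrib, ← mul_sum, sum_ite_eq', mem_univ, if_true,
    AddChar.map_add_eq_mul, neg_one_mul]
  ring

lemma re_stdAddChar (k : ZMod N) :
    (ZMod.stdAddChar k).re = Real.cos (2 * Real.pi * k.val / N) := by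
  rw [ZMod.stdAddChar_apply, ZMod.toCircle_eq_circleExp, Circle.coe_exp,
    Complex.exp_ofReal_mul_I_re, mul_div_assoc]

lemma re_genEigval (dbar : ℝ) (k : ZMod N) :
    (genEigval N dbar k).re = (N ^ 2 + dbar * N) * (Real.cos (2 * Real.pi * k.val / N) - 1) := by
  simp only [genEigval, AddChar.map_neg_eq_conj, ← re_stdAddChar]
  simp [pow_two]
  ring

lemma exp_smul_genMat_map (dbar t : ℝ) :
    (NormedSpace.exp (t • genMat N dbar)).map (algebraMap ℝ ℂ)
      = dftMat N * diagonal (fun k => Complex.exp (t * genEigval N dbar k)) * (dftMat N)⁻¹ := by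
  have hconj : (t • genMat N dbar).map (algebraMap ℝ ℂ)
      = dftMat N * diagonal (fun k => t * genEigval N dbar k) * (dftMat N)⁻¹ := by
    have hdiag : (genMat N dbar).map (algebraMap ℝ ℂ)
        = dftMat N * diagonal (genEigval N dbar) * (dftMat N)⁻¹ := by
      rw [← genMat_map_mul_dftMat, mul_nonsing_inv_cancel_right _ _
        ((isUnit_iff_isUnit_det _).mp isUnit_dftMat)]
    rw [Matrix.map_smul' _ _ _ (map_mul _), hdiag, ← Matrix.smul_mul, ← Matrix.mul_smul,
      ← diagonal_smul]
    rfl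
  rw [Matrix.map_exp _ (continuous_algebraMap ℝ ℂ), hconj, Matrix.exp_conj _ _ isUnit_dftMat,
    Matrix.exp_diagonal, Pi.exp_def, Complex.exp_eq_exp_ℂ]

lemma exp_smul_genMat_apply_le (dbar t : ℝ) (x y : ZMod N) :
    NormedSpace.exp (t • genMat N dbar) x y
      ≤ (N : ℝ)⁻¹ * ∑ k : ZMod N,
          Real.exp (t * (N ^ 2 + dbar * N) * (Real.cos (2 * Real.pi * k.val / N) - 1)) := by
  have hentry : (NormedSpace.exp (t • genMat N dbar) x y : ℂ) = (N : ℂ)⁻¹ * ∑ k,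
      ZMod.stdAddChar (x * k) * Complex.exp (t * genEigval N dbar k)
        * star (ZMod.stdAddChar (y * k)) := by
    have h := congrFun (congrFun (exp_smul_genMat_map dbar t) x) y
    rw [map_apply, Complex.coe_algebraMap] at h
    rw [h, inv_dftMat, Matrix.mul_smul, Matrix.smul_apply, mul_apply, smul_eq_mul]
    simp [mul_diagonal, dftMat]
  calc NormedSpace.exp (t • genMat N dbar) x y
      ≤ ‖(NormedSpace.exp (t • genMat N dbar) x y : ℂ)‖ := by
        rw [Complex.norm_real, Real.norm_eq_abs]
        exact le_abs_self _
    _ ≤ _ := by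
      rw [hentry, norm_mul, norm_inv, Complex.norm_natCast]
      gcongr
      refine (norm_sum_le _ _).trans (sum_le_sum fun k _ => ?_)
      rw [norm_mul, norm_mul, norm_star, AddChar.norm_apply, AddChar.norm_apply,
        Complex.norm_exp, Complex.re_ofReal_mul, re_genEigval, one_mul, mul_one, ← mul_assoc]

lemma sum_zmod_val_eq_sum_range {M : Type*} [AddCommMonoid M] (f : ℕ → M) :
    ∑ k : ZMod N, f k.val = ∑ j ∈ range N, f j := by
  obtain ⟨n, rfl⟩ : ∃ n, N = n + 1 := Nat.exists_eq_succ_of_ne_zero (NeZero.ne N)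
  exact Fin.sum_univ_eq_sum_range f (n + 1)

variable {dbar t : ℝ}

lemma exp_smul_genMat_apply_le_one (ht : 0 ≤ t) (hN : 2 * |dbar| ≤ N) (x y : ZMod N) :
    NormedSpace.exp (t • genMat N dbar) x y ≤ 1 := by
  have hrate : 0 ≤ t * ((N : ℝ) ^ 2 + dbar * N) :=
    mul_nonneg ht ((by positivity : (0 : ℝ) ≤ N ^ 2 / 2).trans (half_sq_le_sq_add_mul hN))
  calc NormedSpace.exp (t • genMat N dbar) x y
      ≤ (N : ℝ)⁻¹ * ∑ k : ZMod N,
          Real.exp (t * (N ^ 2 + dbar * N) * (Real.cos (2 * Real.pi * k.val / N) - 1)) :=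
        exp_smul_genMat_apply_le dbar t x y
    _ ≤ (N : ℝ)⁻¹ * ∑ _k : ZMod N, 1 := by
        gcongr
        exact Real.exp_le_one_iff.mpr (mul_nonpos_of_nonneg_of_nonpos hrate
          (by linarith [Real.cos_le_one (2 * Real.pi * k.val / N)]))
    _ = 1 := by simp [ZMod.card, NeZero.ne]

lemma mul_sqrt_mul_exp_smul_genMat_apply_le (ht : 0 ≤ t) (hN : 2 * |dbar| ≤ N) (x y : ZMod N) :
    N * √t * NormedSpace.exp (t • genMat N dbar) x y ≤ 4 * √t + 2 := by
  rcases ht.eq_or_lt with rfl | ht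
  · simp
  have hs : 0 < √t := Real.sqrt_pos.mpr ht
  have hN0 : (N : ℝ) ≠ 0 := Nat.cast_ne_zero.mpr (NeZero.ne N)
  have hrate : √t ^ 2 * N ^ 2 / 2 ≤ t * (N ^ 2 + dbar * N) := by
    rw [Real.sq_sqrt ht.le, mul_div_assoc]
    exact mul_le_mul_of_nonneg_left (half_sq_le_sq_add_mul hN) ht.le
  have hsum := sum_range_exp_mul_cos_sub_one_le (Nat.pos_of_neZero N) hs hrate
  rw [← sum_zmod_val_eq_sum_range] at hsum
  calc N * √t * NormedSpace.exp (t • genMat N dbar) x y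
      ≤ N * √t * ((N : ℝ)⁻¹ * (4 + 2 / √t)) := by
        gcongr
        exact (exp_smul_genMat_apply_le dbar t x y).trans (by gcongr)
    _ = 4 * √t + 2 := by
        field_simp

end Fourier

end DiscreteHeat

open DiscreteHeat

/-- there is `C = C(d̄)` such that for every `N ≥ 2|d̄|`, all `0 ≤ S ≤ T ≤ 1`,
all `x, y ∈ 𝕋_N` and every `ν ∈ [0,1]`: `N^ν (T−S)^{ν/2} H^N_{S,T,x,y} ≤ C`. -/
theorem stmt_1 (dbar : ℝ) :
    ∃ C : ℝ, ∀ (N : ℕ) [NeZero N], 2 * |dbar| ≤ (N : ℝ) →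
      ∀ S T : ℝ, 0 ≤ S → S ≤ T → T ≤ 1 →
        ∀ x y : ZMod N, ∀ ν : ℝ, ν ∈ Set.Icc (0:ℝ) 1 →
          (N : ℝ) ^ ν * (T - S) ^ (ν / 2) * heatKer N dbar S T x y ≤ C := by
  refine ⟨6, fun N _ hN S T hS hST hT1 x y ν hν => ?_⟩
  have ht : 0 ≤ T - S := sub_nonneg.mpr hST
  have hprefactor : (N : ℝ) ^ ν * (T - S) ^ (ν / 2) = (N * √(T - S)) ^ ν := by
    rw [Real.mul_rpow (Nat.cast_nonneg N) (Real.sqrt_nonneg _), Real.sqrt_eq_rpow,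
      ← Real.rpow_mul ht, one_div_mul_eq_div]
  have hsqrt : √(T - S) ≤ 1 := Real.sqrt_le_one.mpr (by linarith)
  rw [hprefactor]
  refine rpow_mul_le_of_mul_le (by positivity) (exp_smul_genMat_apply_le_one ht hN x y) ?_
    (by norm_num) hν
  have := mul_sqrt_mul_exp_smul_genMat_apply_le ht hN x y
  unfold heatKer
  linarith
end

section
/- There exists a constant C depending only on d̄ such that for every integer N ≥ 2|d̄|, all 0 ≤ S ≤ T ≤ 1, all x, y ∈ 𝕋_N, every nonzero ℓ ∈ ℤ, and every real ν ∈ [0,1], the spatial gradient in the backward variable x satisfies N^{2ν} · (T−S)^{ν} · |ℓ|^{−ν} · |H^N_{S,T,x+ℓ,y} − H^N_{S,T,x,y}| ≤ C. -/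
/-!
`L_N` is a circulant matrix, so it is diagonalised by the characters of `ZMod N`:
`H_{S,T,x,y} = N⁻¹ ∑ₖ e(k(x-y)/N) exp((T-S) λₖ)`. Writing `mₖ ∈ (-N/2, N/2]` for the
representative of `k`, the bound `cos θ ≤ 1 - 2θ²/π²` on `[-π, π]` and `N ≥ 2|d̄|` give
`Re λₖ ≤ -4 mₖ²`. The gradient `∇_ℓ` multiplies the `k`-th term by `e(kℓ/N) - 1`, of modulus at
most `min(2, 2π|mₖ||ℓ|/N)`. Hence `|∇_ℓ H| ≤ 2`, and `N²(T-S)|ℓ|⁻¹ |∇_ℓ H|` is at most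
`2π t ∑ₖ |mₖ| exp(-4t mₖ²) ≤ π` with `t = T - S`, by a telescoping Gaussian sum.
Interpolating between these two bounds gives the estimate for `ν ∈ [0, 1]` with `C = π`.
-/

open MeasureTheory

open Matrix Finset Real
open scoped ZMod

lemma mul_exp_neg_mul_sq_succ_le {a : ℝ} (ha : 0 ≤ a) (n : ℕ) :
    a * ((n + 1) * exp (-a * (n + 1) ^ 2)) ≤ exp (-a * n ^ 2) - exp (-a * (n + 1) ^ 2) := by
  set E := exp (-a * (n + 1) ^ 2)
  have hsplit : exp (-a * n ^ 2) = E * exp (a * (2 * n + 1)) := by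
    rw [← Real.exp_add]; ring_nf
  have hE : 0 ≤ E := (Real.exp_pos _).le
  rw [hsplit]
  nlinarith [mul_le_mul_of_nonneg_left (Real.add_one_le_exp (a * (2 * n + 1))) hE,
    mul_nonneg (mul_nonneg hE ha) n.cast_nonneg]

lemma mul_sum_range_succ_mul_exp_le {a : ℝ} (ha : 0 ≤ a) (M : ℕ) :
    a * ∑ n ∈ range (M + 1), (n : ℝ) * exp (-a * n ^ 2) ≤ 1 - exp (-a * M ^ 2) := by
  induction M with
  | zero => simp
  | succ M ih =>
    rw [Finset.sum_range_succ, mul_add]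
    have := mul_exp_neg_mul_sq_succ_le ha M
    push_cast at this ⊢
    linarith

lemma rpow_mul_le_of_le_of_mul_le {a D B ν : ℝ} (ha : 0 ≤ a) (hD : 0 ≤ D) (h₀ : D ≤ B)
    (h₁ : a * D ≤ B) (hν : ν ∈ Set.Icc (0 : ℝ) 1) : a ^ ν * D ≤ B := by
  rcases le_total a 1 with ha1 | ha1
  · calc a ^ ν * D ≤ 1 * D := by gcongr; exact Real.rpow_le_one ha ha1 hν.1
      _ ≤ B := by rwa [one_mul]
  · calc a ^ ν * D ≤ a ^ (1 : ℝ) * D := by gcongr; exact hν.2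
      _ ≤ B := by rwa [Real.rpow_one]

namespace ZMod

variable {N : ℕ} [NeZero N]

noncomputable def invDFTMatrix (N : ℕ) [NeZero N] : (Matrix (ZMod N) (ZMod N) ℂ)ˣ where
  val := LinearMap.toMatrix' (𝓕⁻ : (ZMod N → ℂ) ≃ₗ[ℂ] (ZMod N → ℂ)).toLinearMap
  inv := LinearMap.toMatrix' (𝓕 : (ZMod N → ℂ) ≃ₗ[ℂ] (ZMod N → ℂ)).toLinearMap
  val_inv := by rw [← LinearMap.toMatrix'_comp, LinearEquiv.symm_comp, LinearMap.toMatrix'_id]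
  inv_val := by rw [← LinearMap.toMatrix'_comp, LinearEquiv.comp_symm, LinearMap.toMatrix'_id]

lemma invDFTMatrix_apply (x k : ZMod N) :
    (invDFTMatrix N : Matrix (ZMod N) (ZMod N) ℂ) x k = (N : ℂ)⁻¹ * stdAddChar (k * x) := by
  simp [invDFTMatrix, LinearMap.toMatrix'_apply, invDFT_apply, Pi.single_apply]

lemma circulant_mul_invDFTMatrix (v : ZMod N → ℂ) :
    circulant v * invDFTMatrix N = invDFTMatrix N * diagonal (𝓕 v) := by
  ext x k
  rw [mul_diagonal, mul_apply, invDFTMatrix_apply, dft_apply, mul_assoc, Finset.mul_sum,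
    ← (Equiv.subLeft x).sum_comp, Finset.mul_sum]
  refine Fintype.sum_congr _ _ fun j => ?_
  simp only [Equiv.subLeft_apply, circulant_apply, sub_sub_cancel, invDFTMatrix_apply, smul_eq_mul]
  rw [show k * (x - j) = k * x + -(j * k) by ring, AddChar.map_add_eq_mul]
  ring

lemma circulant_invDFT (w : ZMod N → ℂ) :
    circulant (𝓕⁻ w) = invDFTMatrix N * diagonal w * (invDFTMatrix N)⁻¹ := by
  conv_rhs => rw [← LinearEquiv.apply_symm_apply 𝓕 w, ← circulant_mul_invDFTMatrix,
    Units.mul_inv_cancel_right]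

theorem exp_circulant (v : ZMod N → ℂ) :
    NormedSpace.exp (circulant v) = circulant (𝓕⁻ fun k => Complex.exp (𝓕 v k)) := by
  rw [← LinearEquiv.symm_apply_apply 𝓕 v, circulant_invDFT, exp_units_conj, exp_diagonal,
    circulant_invDFT, LinearEquiv.apply_symm_apply]
  congr
  funext k
  rw [Pi.coe_exp, Complex.exp_eq_exp_ℂ]

lemma norm_stdAddChar (k : ZMod N) : ‖stdAddChar k‖ = 1 := Circle.norm_coe _

lemma norm_invDFT_add_sub_le (Ψ : ZMod N → ℂ) (z a : ZMod N) :
    ‖𝓕⁻ Ψ (z + a) - 𝓕⁻ Ψ z‖ ≤ (N : ℝ)⁻¹ * ∑ k, ‖stdAddChar (k * a) - 1‖ * ‖Ψ k‖ := by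
  rw [invDFT_apply, invDFT_apply, ← smul_sub, ← Finset.sum_sub_distrib, norm_smul, norm_inv,
    Complex.norm_natCast]
  gcongr
  refine (norm_sum_le _ _).trans (Finset.sum_le_sum fun k _ => le_of_eq ?_)
  rw [mul_add, AddChar.map_add_eq_mul, smul_eq_mul, smul_eq_mul,
    show ∀ u v w : ℂ, u * v * w - u * w = u * ((v - 1) * w) by intros; ring, norm_mul,
    norm_stdAddChar, one_mul, norm_mul]

lemma stdAddChar_eq_exp (k : ZMod N) :
    stdAddChar k = Complex.exp ((2 * π * k.valMinAbs / N : ℝ) * Complex.I) := by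
  conv_lhs => rw [← ZMod.coe_valMinAbs k]
  rw [stdAddChar_coe]
  push_cast
  ring_nf

lemma norm_stdAddChar_mul_sub_one_le (k : ZMod N) (ℓ : ℤ) :
    ‖stdAddChar (k * (ℓ : ZMod N)) - 1‖ ≤ 2 * π * |(k.valMinAbs : ℝ)| * |(ℓ : ℝ)| / N := by
  have hkℓ : k * (ℓ : ZMod N) = ((k.valMinAbs * ℓ : ℤ) : ZMod N) := by
    push_cast [ZMod.coe_valMinAbs]; rfl
  have hN : (0 : ℝ) < N := Nat.cast_pos.2 (NeZero.pos N)
  rw [hkℓ, stdAddChar_coe]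
  calc ‖Complex.exp (2 * π * Complex.I * ((k.valMinAbs * ℓ : ℤ) : ℂ) / N) - 1‖
      = ‖Complex.exp (Complex.I * (2 * π * k.valMinAbs * ℓ / N : ℝ)) - 1‖ := by
        push_cast; ring_nf
    _ ≤ ‖(2 * π * k.valMinAbs * ℓ / N : ℝ)‖ := Real.norm_exp_I_mul_ofReal_sub_one_le
    _ = _ := by
        rw [Real.norm_eq_abs, abs_div, abs_mul, abs_mul, abs_of_pos hN,
          abs_of_pos (by positivity : (0 : ℝ) < 2 * π)]

lemma card_filter_natAbs_valMinAbs_eq_le_two (n : ℕ) :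
    #{k : ZMod N | k.valMinAbs.natAbs = n} ≤ 2 := by
  refine (Finset.card_le_card_of_injOn (fun k => k.valMinAbs) (t := {(n : ℤ), -(n : ℤ)})
    (fun k hk => ?_) (ZMod.injective_valMinAbs.injOn)).trans (Finset.card_le_two)
  rcases Int.natAbs_eq_iff.1 (Finset.mem_filter.1 hk).2 with h | h <;> simp [h]

lemma sum_natAbs_valMinAbs_le {g : ℕ → ℝ} (hg : ∀ n, 0 ≤ g n) :
    ∑ k : ZMod N, g k.valMinAbs.natAbs ≤ 2 * ∑ n ∈ range (N / 2 + 1), g n := by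
  have hmaps (k : ZMod N) (_ : k ∈ univ) : k.valMinAbs.natAbs ∈ range (N / 2 + 1) :=
    Finset.mem_range.2 (Nat.lt_succ_of_le (ZMod.natAbs_valMinAbs_le k))
  rw [← Finset.sum_fiberwise_of_maps_to hmaps, Finset.mul_sum]
  refine Finset.sum_le_sum fun n _ => ?_
  rw [Finset.sum_congr rfl fun k hk => congrArg g (Finset.mem_filter.1 hk).2, Finset.sum_const,
    nsmul_eq_mul]
  exact mul_le_mul_of_nonneg_right (by exact_mod_cast card_filter_natAbs_valMinAbs_eq_le_two n)
    (hg n)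

lemma sum_abs_valMinAbs_mul_exp_le {a : ℝ} (ha : 0 < a) :
    ∑ k : ZMod N, |(k.valMinAbs : ℝ)| * exp (-a * (k.valMinAbs : ℝ) ^ 2) ≤ 2 / a := by
  have hnatAbs (m : ℤ) : |(m : ℝ)| * exp (-a * (m : ℝ) ^ 2) =
      (m.natAbs : ℝ) * exp (-a * (m.natAbs : ℝ) ^ 2) := by
    rw [Nat.cast_natAbs, Int.cast_abs, sq_abs]
  simp only [hnatAbs]
  calc ∑ k : ZMod N, (k.valMinAbs.natAbs : ℝ) * exp (-a * (k.valMinAbs.natAbs : ℝ) ^ 2)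
      ≤ 2 * ∑ n ∈ range (N / 2 + 1), (n : ℝ) * exp (-a * n ^ 2) :=
        sum_natAbs_valMinAbs_le (g := fun n => (n : ℝ) * exp (-a * n ^ 2)) fun n => by positivity
    _ ≤ 2 * (1 / a) := by
        gcongr
        rw [le_div_iff₀' ha]
        linarith [mul_sum_range_succ_mul_exp_le ha.le (N / 2), Real.exp_pos (-a * (N / 2 : ℕ) ^ 2)]
    _ = 2 / a := by ring

end ZMod

theorem Matrix.exp_map_ofReal {m : Type*} [Fintype m] [DecidableEq m] (A : Matrix m m ℝ) :
    (NormedSpace.exp A).map Complex.ofReal = NormedSpace.exp (A.map Complex.ofReal) := by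
  -- `exp` does not depend on the norm; the operator norm only serves to apply `map_exp`.
  open scoped Norms.Operator in
  exact NormedSpace.map_exp (Complex.ofRealHom.mapMatrix : Matrix m m ℝ →+* Matrix m m ℂ)
    (continuous_id.matrix_map Complex.continuous_ofReal) A

open ZMod

lemma genMat_apply_eq_sub (N : ℕ) (dbar : ℝ) (x y : ZMod N) :
    genMat N dbar x y = genMat N dbar (x - y) 0 := by
  simp only [genMat, of_apply]
  grind

/-- `genMat N dbar` is circulant with first column `genMat N dbar · 0`, so these are its
eigenvalues. -/
noncomputable def genEigenvalue (N : ℕ) [NeZero N] (dbar : ℝ) : ZMod N → ℂ :=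
  𝓕 fun z => (genMat N dbar z 0 : ℂ)

section HeatKernel

variable {N : ℕ} [NeZero N]

lemma heatKer_eq_invDFT (dbar S T : ℝ) (x y : ZMod N) :
    (heatKer N dbar S T x y : ℂ) =
      𝓕⁻ (fun k => Complex.exp ((T - S : ℝ) * genEigenvalue N dbar k)) (x - y) := by
  have hmap : ((T - S) • genMat N dbar).map Complex.ofReal =
      circulant (((T - S : ℝ) : ℂ) • fun z => (genMat N dbar z 0 : ℂ)) := by
    ext x y
    rw [map_apply, Matrix.smul_apply, genMat_apply_eq_sub, circulant_apply]
    simp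
  calc (heatKer N dbar S T x y : ℂ)
      = (NormedSpace.exp ((T - S) • genMat N dbar)).map Complex.ofReal x y := rfl
    _ = _ := by
      rw [exp_map_ofReal, hmap, exp_circulant, _root_.map_smul, circulant_apply]
      rfl

lemma genEigenvalue_apply (dbar : ℝ) (k : ZMod N) :
    genEigenvalue N dbar k = ((N : ℂ) ^ 2 / 2) * (stdAddChar k + stdAddChar (-k))
      + (dbar * N : ℂ) * stdAddChar (-k) - ((N : ℂ) ^ 2 + dbar * N) := by
  have hsymbol (j : ZMod N) : (genMat N dbar j 0 : ℂ) =
      ((N : ℂ) ^ 2 / 2) * ((if j = -1 then 1 else 0) + (if j = 1 then 1 else 0))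
        + (dbar * N : ℂ) * (if j = 1 then 1 else 0)
        - ((N : ℂ) ^ 2 + dbar * N) * (if j = 0 then 1 else 0) := by
    simp only [genMat, of_apply, eq_comm (a := (0 : ZMod N)), add_eq_zero_iff_eq_neg, sub_eq_zero]
    split_ifs <;> push_cast <;> ring
  simp only [genEigenvalue, dft_apply, hsymbol, smul_eq_mul, mul_add, mul_sub, mul_ite, mul_one,
    mul_zero, Finset.sum_add_distrib, Finset.sum_sub_distrib, Finset.sum_ite_eq', Finset.mem_univ,
    if_true]
  simp only [neg_mul, one_mul, neg_neg, zero_mul, neg_zero, AddChar.map_zero_eq_one]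
  ring

lemma re_genEigenvalue (dbar : ℝ) (k : ZMod N) :
    (genEigenvalue N dbar k).re =
      ((N : ℝ) ^ 2 + dbar * N) * (cos (2 * π * k.valMinAbs / N) - 1) := by
  have hre : (stdAddChar k).re = cos (2 * π * k.valMinAbs / N) := by
    rw [stdAddChar_eq_exp, Complex.exp_ofReal_mul_I_re]
  have hre_neg : (stdAddChar (-k)).re = cos (2 * π * k.valMinAbs / N) := by
    rw [AddChar.map_neg_eq_conj, Complex.conj_re, hre]
  have hreal : genEigenvalue N dbar k =
      (((N : ℝ) ^ 2 / 2 : ℝ) : ℂ) * (stdAddChar k + stdAddChar (-k))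
        + ((dbar * N : ℝ) : ℂ) * stdAddChar (-k) - (((N : ℝ) ^ 2 + dbar * N : ℝ) : ℂ) := by
    rw [genEigenvalue_apply]
    push_cast
    ring
  rw [hreal]
  simp only [Complex.sub_re, Complex.add_re, Complex.re_ofReal_mul, Complex.ofReal_re, hre, hre_neg]
  ring

lemma re_genEigenvalue_le {dbar : ℝ} (hd : 2 * |dbar| ≤ N) (k : ZMod N) :
    (genEigenvalue N dbar k).re ≤ -(4 * (k.valMinAbs : ℝ) ^ 2) := by
  have hN : (0 : ℝ) < N := Nat.cast_pos.2 (NeZero.pos N)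
  set θ := 2 * π * k.valMinAbs / N with hθ
  have habs_m : |(k.valMinAbs : ℝ)| ≤ N / 2 := by
    rw [← Int.cast_abs, Int.abs_eq_natAbs, Int.cast_natCast, le_div_iff₀ two_pos]
    exact_mod_cast (Nat.mul_le_mul_right 2 (ZMod.natAbs_valMinAbs_le k)).trans
      (Nat.div_mul_le_self N 2)
  have habs_θ : |θ| ≤ π := by
    rw [hθ, abs_div, abs_mul, abs_of_pos hN, abs_of_pos (by positivity : (0 : ℝ) < 2 * π),
      div_le_iff₀ hN]
    nlinarith [pi_pos]
  have hcos : cos θ - 1 ≤ -(2 / π ^ 2 * θ ^ 2) := by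
    linarith [cos_le_one_sub_mul_cos_sq habs_θ]
  have hdrift : (N : ℝ) ^ 2 / 2 ≤ N ^ 2 + dbar * N := by
    nlinarith [neg_abs_le dbar]
  rw [re_genEigenvalue]
  calc ((N : ℝ) ^ 2 + dbar * N) * (cos θ - 1)
      ≤ (N ^ 2 / 2) * (cos θ - 1) :=
        mul_le_mul_of_nonpos_right hdrift (hcos.trans (neg_nonpos.2 (by positivity)))
    _ ≤ (N ^ 2 / 2) * -(2 / π ^ 2 * θ ^ 2) := by gcongr
    _ = -(4 * (k.valMinAbs : ℝ) ^ 2) := by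
        rw [hθ]
        field_simp
        ring

lemma abs_heatKer_add_sub_le {dbar : ℝ} (hd : 2 * |dbar| ≤ N) {S T : ℝ} (hST : S ≤ T)
    (x y : ZMod N) (ℓ : ℤ) :
    |heatKer N dbar S T (x + ℓ) y - heatKer N dbar S T x y| ≤
      (N : ℝ)⁻¹ * ∑ k : ZMod N, ‖stdAddChar (k * (ℓ : ZMod N)) - 1‖ *
        exp (-(4 * (T - S)) * (k.valMinAbs : ℝ) ^ 2) := by
  rw [← Real.norm_eq_abs, ← Complex.norm_real, Complex.ofReal_sub, heatKer_eq_invDFT,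
    heatKer_eq_invDFT, add_sub_right_comm]
  refine (norm_invDFT_add_sub_le _ _ _).trans ?_
  gcongr with k
  rw [Complex.norm_exp, Complex.re_ofReal_mul, Real.exp_le_exp]
  nlinarith [mul_le_mul_of_nonneg_left (re_genEigenvalue_le hd k) (sub_nonneg.2 hST)]

lemma abs_heatKer_add_sub_le_two {dbar : ℝ} (hd : 2 * |dbar| ≤ N) {S T : ℝ} (hST : S ≤ T)
    (x y : ZMod N) (ℓ : ℤ) :
    |heatKer N dbar S T (x + ℓ) y - heatKer N dbar S T x y| ≤ 2 := by
  have hN : (0 : ℝ) < N := Nat.cast_pos.2 (NeZero.pos N)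
  refine (abs_heatKer_add_sub_le hd hST x y ℓ).trans ?_
  calc (N : ℝ)⁻¹ * ∑ k : ZMod N, ‖stdAddChar (k * (ℓ : ZMod N)) - 1‖ *
        exp (-(4 * (T - S)) * (k.valMinAbs : ℝ) ^ 2)
      ≤ (N : ℝ)⁻¹ * ∑ _k : ZMod N, 2 * 1 := by
        gcongr with k
        · exact (norm_sub_le _ _).trans (by rw [norm_stdAddChar, norm_one]; norm_num)
        · exact Real.exp_le_one_iff.2 (mul_nonpos_of_nonpos_of_nonneg (by linarith) (sq_nonneg _))
    _ = 2 := by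
        rw [Finset.sum_const, Finset.card_univ, ZMod.card, nsmul_eq_mul]
        field_simp

lemma mul_abs_heatKer_add_sub_le_pi {dbar : ℝ} (hd : 2 * |dbar| ≤ N) {S T : ℝ} (hST : S ≤ T)
    (x y : ZMod N) {ℓ : ℤ} (hℓ : ℓ ≠ 0) :
    (N : ℝ) ^ 2 * (T - S) * |(ℓ : ℝ)|⁻¹ *
      |heatKer N dbar S T (x + ℓ) y - heatKer N dbar S T x y| ≤ π := by
  have hN : (0 : ℝ) < N := Nat.cast_pos.2 (NeZero.pos N)
  have hℓ' : (0 : ℝ) < |(ℓ : ℝ)| := abs_pos.2 (Int.cast_ne_zero.2 hℓ)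
  rcases (sub_nonneg.2 hST).eq_or_lt with ht | ht
  · rw [← ht, mul_zero, zero_mul, zero_mul]
    exact pi_pos.le
  set t := T - S
  calc (N : ℝ) ^ 2 * t * |(ℓ : ℝ)|⁻¹ * |heatKer N dbar S T (x + ℓ) y - heatKer N dbar S T x y|
      ≤ (N : ℝ) ^ 2 * t * |(ℓ : ℝ)|⁻¹ * ((N : ℝ)⁻¹ * ∑ k : ZMod N,
          2 * π * |(k.valMinAbs : ℝ)| * |(ℓ : ℝ)| / N *
            exp (-(4 * t) * (k.valMinAbs : ℝ) ^ 2)) := by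
        refine mul_le_mul_of_nonneg_left ((abs_heatKer_add_sub_le hd hST x y ℓ).trans ?_)
          (by positivity)
        gcongr with k
        exact norm_stdAddChar_mul_sub_one_le k ℓ
    _ = 2 * π * t * ∑ k : ZMod N,
          |(k.valMinAbs : ℝ)| * exp (-(4 * t) * (k.valMinAbs : ℝ) ^ 2) := by
        simp only [Finset.mul_sum]
        refine Finset.sum_congr rfl fun k _ => ?_
        field_simp
    _ ≤ 2 * π * t * (2 / (4 * t)) := by
        gcongr
        exact sum_abs_valMinAbs_mul_exp_le (by positivity)
    _ = π := by
        field_simp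
        ring

end HeatKernel

/-- spatial-gradient estimate for the heat kernel (gradient in the backward
variable `x`): `N^{2ν} (T−S)^{ν} |ℓ|^{−ν} |H^N_{S,T,x+ℓ,y} − H^N_{S,T,x,y}| ≤ C`. -/
theorem stmt_2 (dbar : ℝ) :
    ∃ C : ℝ, ∀ (N : ℕ) [NeZero N], 2 * |dbar| ≤ (N : ℝ) →
      ∀ S T : ℝ, 0 ≤ S → S ≤ T → T ≤ 1 →
        ∀ x y : ZMod N, ∀ ℓ : ℤ, ℓ ≠ 0 → ∀ ν : ℝ, ν ∈ Set.Icc (0:ℝ) 1 →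
          (N : ℝ) ^ (2 * ν) * (T - S) ^ ν * |(ℓ : ℝ)| ^ (-ν) *
              |heatKer N dbar S T (x + (ℓ : ZMod N)) y - heatKer N dbar S T x y| ≤ C := by
  refine ⟨π, fun N _ hd S T _ hST _ x y ℓ hℓ ν hν => ?_⟩
  have hweight : (N : ℝ) ^ (2 * ν) * (T - S) ^ ν * |(ℓ : ℝ)| ^ (-ν) =
      ((N : ℝ) ^ 2 * (T - S) * |(ℓ : ℝ)|⁻¹) ^ ν := by
    rw [Real.mul_rpow (by positivity) (by positivity), Real.mul_rpow (by positivity)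
      (sub_nonneg.2 hST), Real.rpow_mul (Nat.cast_nonneg N), Real.rpow_two,
      Real.rpow_neg (abs_nonneg _), Real.inv_rpow (abs_nonneg _)]
  rw [hweight]
  exact rpow_mul_le_of_le_of_mul_le (by positivity [sub_nonneg.2 hST]) (abs_nonneg _)
    ((abs_heatKer_add_sub_le_two hd hST x y ℓ).trans two_le_pi)
    (mul_abs_heatKer_add_sub_le_pi hd hST x y hℓ) hν
end

section
/- There exists a constant C depending only on d̄ such that the following holds for every integer N ≥ 2|d̄|. Let φ, Y: [0,1] × 𝕋_N → ℝ be bounded measurable with sup |φ| ≤ 1 and sup |Y| ≤ N^{ε_ap}, and define G(T,x) = ∫_{max(T − N^{−1/2−999ε_RN}, 0)}^{T} Σ_{y∈𝕋_N} H^N_{S,T,x,y} · N^{1/2} · φ(S,y) · Y(S,y) dS. Then sup_{(T,x)∈[0,1]×𝕋_N} sup_{ℓ∈ℤ, 1≤|ℓ|≤N^{1/2+ε_RN}} |ℓ|^{−1} |G(T,x+ℓ) − G(T,x)| ≤ C · N^{−3/4 − (999/2)ε_RN + ε_ap}. -/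
open MeasureTheory

/-- The space-time heat operator `H^N_{T,x}(φ) = ∫_0^T Σ_y H^N_{S,T,x,y} φ(S,y) dS`. -/
noncomputable def heatOp (N : ℕ) [NeZero N] (dbar : ℝ) (φ : ℝ → ZMod N → ℝ)
    (T : ℝ) (x : ZMod N) : ℝ :=
  ∫ S in (0:ℝ)..T, ∑ y : ZMod N, heatKer N dbar S T x y * φ S y

/-- The constant `ε_RN = 999^{−999}`. -/
noncomputable def epsRN : ℝ := ((999 : ℝ) ^ (999 : ℕ))⁻¹

/-!
Write `L_N = (N²/2)(S₁ - 1) + (N²/2 + d̄N)(S₋₁ - 1)` with the shift matrices `S_c`. The two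
terms commute, so `exp(tL_N) = e^{-a} exp(a S₁) · e^{-b} exp(b S₋₁)` with `a = tN²/2` and
`b = t(N²/2 + d̄N)`, and `N ≥ 2|d̄|` gives `b ≥ 0`: the second factor is a stochastic matrix, and
the rows of the first are Poisson(`a`) distributions started at `x`. Moving the starting point by
one replaces the Poisson weight `p n` by `n p n / a`, so the `ℓ¹` distance between neighbouring
rows is at most `E|X - a| / a ≤ √(Var X) / a = 1/√a = √2/(N√t)` for `X ~ Poisson(a)`.
Telescoping gives `|ℓ|√2/(N√t)` for a shift by `ℓ`, and integrating `(T - S)^{-1/2}` over the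
window of length `N^{-1/2-999ε_RN}` against `|N^{1/2} φ Y| ≤ N^{1/2+ε_ap}` yields the bound with
`C = 2√2`.
-/

section PoissonWeights

open scoped Nat

variable (a : ℝ)

theorem hasSum_pow_div_factorial : HasSum (fun n : ℕ => a ^ n / n !) (Real.exp a) := by
  rw [Real.exp_eq_exp_ℝ]
  exact NormedSpace.expSeries_div_hasSum_exp a

theorem succ_mul_pow_succ_div_factorial (n : ℕ) :
    ((n : ℝ) + 1) * (a ^ (n + 1) / (n + 1)!) = a * (a ^ n / n !) := by
  rw [Nat.factorial_succ, Nat.cast_mul, pow_succ]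
  field_simp
  push_cast
  ring

theorem hasSum_natCast_mul_pow_div_factorial :
    HasSum (fun n : ℕ => n * (a ^ n / n !)) (a * Real.exp a) := by
  rw [← hasSum_nat_add_iff' 1]
  simpa [succ_mul_pow_succ_div_factorial] using (hasSum_pow_div_factorial a).mul_left a

theorem hasSum_natCast_sq_mul_pow_div_factorial :
    HasSum (fun n : ℕ => (n : ℝ) ^ 2 * (a ^ n / n !)) (a * (a + 1) * Real.exp a) := by
  rw [← hasSum_nat_add_iff' 1, Finset.sum_range_one, Nat.cast_zero, zero_pow two_ne_zero,
    zero_mul, sub_zero, show a * (a + 1) * Real.exp a = a * (a * Real.exp a + Real.exp a) by ring]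
  refine ((hasSum_natCast_mul_pow_div_factorial a).add
    (hasSum_pow_div_factorial a)).mul_left a |>.congr_fun fun n => ?_
  push_cast
  rw [sq, mul_assoc, succ_mul_pow_succ_div_factorial]
  ring

theorem hasSum_sub_sq_mul_pow_div_factorial :
    HasSum (fun n : ℕ => ((n : ℝ) - a) ^ 2 * (a ^ n / n !)) (a * Real.exp a) := by
  rw [show a * Real.exp a =
    a * (a + 1) * Real.exp a - 2 * a * (a * Real.exp a) + a ^ 2 * Real.exp a by ring]
  refine ((hasSum_natCast_sq_mul_pow_div_factorial a).sub
    ((hasSum_natCast_mul_pow_div_factorial a).mul_left (2 * a))).add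
    ((hasSum_pow_div_factorial a).mul_left (a ^ 2)) |>.congr_fun fun n => by ring

theorem two_mul_abs_le_sq_div_add {c : ℝ} (hc : 0 < c) (y : ℝ) : 2 * |y| ≤ y ^ 2 / c + c := by
  rw [div_add' _ _ _ hc.ne', le_div_iff₀ hc]
  nlinarith [sq_nonneg (|y| - c), sq_abs y]

variable {a}

theorem abs_sub_mul_pow_div_factorial_le (ha : 0 < a) (n : ℕ) :
    |(n : ℝ) - a| * (a ^ n / n !) ≤ (((n : ℝ) - a) ^ 2 / √a + √a) / 2 * (a ^ n / n !) := by
  gcongr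
  linarith [two_mul_abs_le_sq_div_add (Real.sqrt_pos.mpr ha) ((n : ℝ) - a)]

theorem hasSum_sub_sq_div_add_mul_pow_div_factorial (ha : 0 < a) :
    HasSum (fun n : ℕ => (((n : ℝ) - a) ^ 2 / √a + √a) / 2 * (a ^ n / n !))
      (√a * Real.exp a) := by
  have hs : √a ≠ 0 := (Real.sqrt_pos.mpr ha).ne'
  rw [show √a * Real.exp a = (a * Real.exp a / √a + √a * Real.exp a) / 2 by
    field_simp; rw [Real.sq_sqrt ha.le]; ring]
  exact (((hasSum_sub_sq_mul_pow_div_factorial a).div_const √a).add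
    ((hasSum_pow_div_factorial a).mul_left √a)).div_const 2 |>.congr_fun fun n => by ring

theorem summable_abs_sub_mul_pow_div_factorial (ha : 0 < a) :
    Summable fun n : ℕ => |(n : ℝ) - a| * (a ^ n / n !) :=
  (hasSum_sub_sq_div_add_mul_pow_div_factorial ha).summable.of_nonneg_of_le
    (fun n => by positivity) (abs_sub_mul_pow_div_factorial_le ha)

theorem tsum_abs_sub_mul_pow_div_factorial_le (ha : 0 < a) :
    ∑' n : ℕ, |(n : ℝ) - a| * (a ^ n / n !) ≤ √a * Real.exp a :=
  hasSum_le (abs_sub_mul_pow_div_factorial_le ha)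
    (summable_abs_sub_mul_pow_div_factorial ha).hasSum
    (hasSum_sub_sq_div_add_mul_pow_div_factorial ha)

end PoissonWeights

section Pushforward

variable {G : Type*} [Fintype G] [DecidableEq G] (f : ℕ → G)

theorem sum_eq_of_hasSum_ite {u : ℕ → ℝ} {s : ℝ} {v : G → ℝ}
    (hv : ∀ z, HasSum (fun n => if z = f n then u n else 0) (v z)) (hu : HasSum u s) :
    ∑ z, v z = s :=
  (hasSum_sum fun z _ => hv z).unique <| by simpa [Finset.sum_ite_eq'] using hu

theorem sum_abs_le_of_hasSum_ite {u : ℕ → ℝ} {v : G → ℝ}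
    (hv : ∀ z, HasSum (fun n => if z = f n then u n else 0) (v z))
    (hu : Summable fun n => |u n|) :
    ∑ z, |v z| ≤ ∑' n, |u n| := by
  have habs (z : G) : HasSum (fun n => if z = f n then |u n| else 0)
      (∑' n, if z = f n then |u n| else 0) :=
    (hu.of_nonneg_of_le (fun n => by split_ifs <;> simp)
      (fun n => by split_ifs <;> simp)).hasSum
  rw [← sum_eq_of_hasSum_ite f habs hu.hasSum]
  refine Finset.sum_le_sum fun z _ => abs_le.mpr ⟨?_, ?_⟩
  · refine hasSum_le (fun n => ?_) (habs z).neg (hv z)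
    split_ifs <;> simp [neg_abs_le]
  · refine hasSum_le (fun n => ?_) (hv z) (habs z)
    split_ifs <;> simp [le_abs_self]

end Pushforward

theorem Matrix.sum_abs_mul_apply_sub_le {ι κ μ : Type*} [Fintype κ] [Fintype μ]
    (A : Matrix ι κ ℝ) (B : Matrix κ μ ℝ) {r : ℝ} (hB : ∀ z y, 0 ≤ B z y)
    (hrow : ∀ z, ∑ y, B z y = r) (x x' : ι) :
    ∑ y, |(A * B) x' y - (A * B) x y| ≤ (∑ z, |A x' z - A x z|) * r :=
  calc ∑ y, |(A * B) x' y - (A * B) x y| = ∑ y, |∑ z, (A x' z - A x z) * B z y| := by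
        simp only [Matrix.mul_apply, sub_mul, Finset.sum_sub_distrib]
    _ ≤ ∑ y, ∑ z, |A x' z - A x z| * B z y :=
        Finset.sum_le_sum fun y _ => (Finset.abs_sum_le_sum_abs _ _).trans_eq
          (Finset.sum_congr rfl fun z _ => by rw [abs_mul, abs_of_nonneg (hB z y)])
    _ = (∑ z, |A x' z - A x z|) * r := by
        rw [Finset.sum_comm, Finset.sum_mul]
        simp only [← Finset.mul_sum, hrow]

theorem dist_add_zsmul_le {G α : Type*} [AddGroup G] [PseudoMetricSpace α] {F : G → α} {g : G}
    {B : ℝ} (h : ∀ x, dist (F (x + g)) (F x) ≤ B) (ℓ : ℤ) (x : G) :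
    dist (F (x + ℓ • g)) (F x) ≤ |(ℓ : ℝ)| * B := by
  induction ℓ using Int.induction_on with
  | zero => simp
  | succ i ih =>
    calc dist (F (x + (i + 1 : ℤ) • g)) (F x)
        ≤ dist (F (x + (i : ℤ) • g + g)) (F (x + (i : ℤ) • g))
            + dist (F (x + (i : ℤ) • g)) (F x) := by
          rw [add_zsmul, one_zsmul, ← add_assoc]
          exact dist_triangle _ _ _
      _ ≤ B + |((i : ℤ) : ℝ)| * B := add_le_add (h _) ih
      _ = |((i + 1 : ℤ) : ℝ)| * B := by
          push_cast
          rw [abs_of_nonneg (by positivity), abs_of_nonneg (by positivity)]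
          ring
  | pred i ih =>
    calc dist (F (x + (-i - 1 : ℤ) • g)) (F x)
        ≤ dist (F (x + (-i - 1 : ℤ) • g)) (F (x + (-i - 1 : ℤ) • g + g))
            + dist (F (x + (-i : ℤ) • g)) (F x) := by
          rw [add_assoc, ← add_one_zsmul, sub_add_cancel]
          exact dist_triangle _ _ _
      _ ≤ B + |((-i : ℤ) : ℝ)| * B := add_le_add ((dist_comm _ _).trans_le (h _)) ih
      _ = |((-i - 1 : ℤ) : ℝ)| * B := by
          have hi : (0 : ℝ) ≤ i := i.cast_nonneg
          push_cast
          rw [abs_neg, abs_of_nonneg hi, abs_of_nonpos (by linarith)]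
          ring

section ShiftMatrix

open scoped Nat

variable {G : Type*} [AddCommGroup G] [DecidableEq G]

def shiftMat (c : G) : Matrix G G ℝ := Matrix.of fun x y => if y = x + c then 1 else 0

theorem shiftMat_zero : shiftMat (0 : G) = 1 := by
  ext x y
  simp [shiftMat, Matrix.one_apply, eq_comm]

variable [Fintype G]

theorem shiftMat_mul (c d : G) : shiftMat c * shiftMat d = shiftMat (c + d) := by
  ext x y
  simp only [shiftMat, Matrix.mul_apply, Matrix.of_apply, ite_mul, one_mul, zero_mul,
    Finset.sum_ite_eq', Finset.mem_univ, if_true, add_assoc]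

theorem shiftMat_pow (c : G) (n : ℕ) : shiftMat c ^ n = shiftMat (n • c) := by
  induction n with
  | zero => rw [pow_zero, zero_smul, shiftMat_zero]
  | succ n ih => rw [pow_succ, ih, shiftMat_mul, succ_nsmul]

theorem commute_smul_shiftMat (a b : ℝ) (c d : G) :
    Commute (a • shiftMat c) (b • shiftMat d) := by
  refine (Commute.smul_left ?_ a).smul_right b
  rw [Commute, SemiconjBy, shiftMat_mul, shiftMat_mul, add_comm]

theorem hasSum_exp_smul_shiftMat_apply (a : ℝ) (c x y : G) :
    HasSum (fun n : ℕ => if y = x + n • c then a ^ n / n ! else 0)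
      (NormedSpace.exp (a • shiftMat c) x y) := by
  -- The analytic facts about `exp` need a Banach-algebra norm; the `ℓ^∞` operator norm induces
  -- the product topology that `Matrix` carries.
  let : NormedRing (Matrix G G ℝ) := Matrix.linftyOpNormedRing
  let : NormedAlgebra ℝ (Matrix G G ℝ) := Matrix.linftyOpNormedAlgebra
  have h := Pi.hasSum.mp (Pi.hasSum.mp
    (NormedSpace.exp_series_hasSum_exp' (𝕂 := ℝ) (a • shiftMat c)) x) y
  refine h.congr_fun fun n => ?_
  rw [smul_pow, shiftMat_pow]
  simp [shiftMat, div_eq_inv_mul]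

theorem exp_smul_shiftMat_apply_nonneg {a : ℝ} (ha : 0 ≤ a) (c x y : G) :
    0 ≤ NormedSpace.exp (a • shiftMat c) x y :=
  (hasSum_exp_smul_shiftMat_apply a c x y).nonneg fun n => by split_ifs <;> positivity

theorem sum_exp_smul_shiftMat_apply (a : ℝ) (c x : G) :
    ∑ y, NormedSpace.exp (a • shiftMat c) x y = Real.exp a :=
  sum_eq_of_hasSum_ite _ (fun y => hasSum_exp_smul_shiftMat_apply a c x y)
    (hasSum_pow_div_factorial a)

theorem hasSum_exp_smul_shiftMat_apply_add {a : ℝ} (ha : a ≠ 0) (c x y : G) :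
    HasSum (fun n : ℕ => if y = x + n • c then n / a * (a ^ n / n !) else 0)
      (NormedSpace.exp (a • shiftMat c) (x + c) y) := by
  rw [← hasSum_nat_add_iff' 1]
  simp only [Finset.sum_range_one, Nat.cast_zero, zero_div, zero_mul, ite_self, sub_zero]
  refine (hasSum_exp_smul_shiftMat_apply a c (x + c) y).congr_fun fun n => ?_
  rw [add_nsmul, one_nsmul, add_right_comm, add_assoc x, ← add_assoc, Nat.cast_add,
    Nat.cast_one, div_mul_eq_mul_div, succ_mul_pow_succ_div_factorial,
    mul_div_cancel_left₀ _ ha]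

theorem sum_abs_exp_smul_shiftMat_apply_add_sub_le {a : ℝ} (ha : 0 < a) (c x : G) :
    ∑ y, |NormedSpace.exp (a • shiftMat c) (x + c) y - NormedSpace.exp (a • shiftMat c) x y|
      ≤ Real.exp a / √a := by
  have hdiff (y : G) : HasSum
      (fun n : ℕ => if y = x + n • c then a⁻¹ * ((n - a) * (a ^ n / n !)) else 0)
      (NormedSpace.exp (a • shiftMat c) (x + c) y - NormedSpace.exp (a • shiftMat c) x y) :=
    ((hasSum_exp_smul_shiftMat_apply_add ha.ne' c x y).sub
      (hasSum_exp_smul_shiftMat_apply a c x y)).congr_fun fun n => by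
        split_ifs
        · field_simp
        · simp
  have habs (n : ℕ) : |a⁻¹ * ((n - a) * (a ^ n / n !))|
      = a⁻¹ * (|(n : ℝ) - a| * (a ^ n / n !)) := by
    rw [abs_mul, abs_mul, abs_of_pos (inv_pos.mpr ha),
      abs_of_nonneg (by positivity : (0 : ℝ) ≤ a ^ n / n !)]
  refine (sum_abs_le_of_hasSum_ite _ hdiff ?_).trans ?_
  · simpa only [habs] using (summable_abs_sub_mul_pow_div_factorial ha).mul_left a⁻¹
  · rw [tsum_congr habs, tsum_mul_left]
    calc a⁻¹ * ∑' n : ℕ, |(n : ℝ) - a| * (a ^ n / n !) ≤ a⁻¹ * (√a * Real.exp a) :=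
          mul_le_mul_of_nonneg_left (tsum_abs_sub_mul_pow_div_factorial_le ha)
            (inv_nonneg.mpr ha.le)
      _ = Real.exp a / √a := by
          rw [← Real.sq_sqrt ha.le]
          field_simp
          rw [Real.sqrt_sq (Real.sqrt_nonneg a)]

end ShiftMatrix

section HeatKernel

variable {N : ℕ} {dbar : ℝ}

theorem genMat_eq_shiftMat :
    genMat N dbar = ((N : ℝ) ^ 2 / 2) • shiftMat 1 + ((N : ℝ) ^ 2 / 2 + dbar * N) • shiftMat (-1)
      - ((N : ℝ) ^ 2 + dbar * N) • (1 : Matrix (ZMod N) (ZMod N) ℝ) := by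
  ext x y
  simp only [genMat, shiftMat, Matrix.sub_apply, Matrix.add_apply, Matrix.smul_apply,
    Matrix.of_apply, Matrix.one_apply, smul_eq_mul, ← sub_eq_add_neg, eq_comm (a := x)]
  ring

theorem drift_coeff_nonneg (hN : 2 * |dbar| ≤ N) : 0 ≤ (N : ℝ) ^ 2 / 2 + dbar * N := by
  nlinarith [neg_abs_le dbar, abs_nonneg dbar, (N.cast_nonneg : (0 : ℝ) ≤ N)]

variable [NeZero N]

theorem exp_smul_genMat (t : ℝ) :
    NormedSpace.exp (t • genMat N dbar) = Real.exp (-(t * ((N : ℝ) ^ 2 + dbar * N))) •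
      (NormedSpace.exp ((t * ((N : ℝ) ^ 2 / 2)) • shiftMat 1) *
        NormedSpace.exp ((t * ((N : ℝ) ^ 2 / 2 + dbar * N)) • shiftMat (-1))) := by
  rw [genMat_eq_shiftMat, smul_sub, smul_add, smul_smul, smul_smul, smul_smul, sub_eq_add_neg,
    ← neg_smul, Matrix.exp_add_of_commute, Matrix.exp_add_of_commute _ _ (commute_smul_shiftMat ..),
    Matrix.smul_one_eq_diagonal, Matrix.exp_diagonal, Pi.exp_def, ← Real.exp_eq_exp_ℝ,
    ← Matrix.smul_one_eq_diagonal, Matrix.mul_smul, mul_one]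
  exact ((Commute.one_right _).smul_right _).add_left ((Commute.one_right _).smul_right _)

theorem sum_abs_exp_smul_genMat_apply_add_one_sub_le (hN : 2 * |dbar| ≤ N) {t : ℝ} (ht : 0 < t)
    (x : ZMod N) :
    ∑ y, |NormedSpace.exp (t • genMat N dbar) (x + 1) y - NormedSpace.exp (t • genMat N dbar) x y|
      ≤ √2 / (N * √t) := by
  set a := t * ((N : ℝ) ^ 2 / 2)
  set b := t * ((N : ℝ) ^ 2 / 2 + dbar * N)
  set P := NormedSpace.exp (a • shiftMat (1 : ZMod N))
  set Q := NormedSpace.exp (b • shiftMat (-1 : ZMod N))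
  have hN0 : (0 : ℝ) < N := by exact_mod_cast Nat.pos_of_ne_zero (NeZero.ne N)
  have ha : 0 < a := by positivity
  have hK (z y : ZMod N) :
      NormedSpace.exp (t • genMat N dbar) z y = Real.exp (-(a + b)) * (P * Q) z y := by
    rw [exp_smul_genMat, Matrix.smul_apply, smul_eq_mul]
    congr 2
    ring
  have hPQ := Matrix.sum_abs_mul_apply_sub_le P Q
    (exp_smul_shiftMat_apply_nonneg (mul_nonneg ht.le (drift_coeff_nonneg hN)) _)
    (sum_exp_smul_shiftMat_apply b _) x (x + 1)
  have hsqrt : √a * √2 = N * √t := by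
    rw [← Real.sqrt_mul ha.le, show a * 2 = N ^ 2 * t by ring, Real.sqrt_mul (by positivity),
      Real.sqrt_sq hN0.le]
  calc ∑ y, |NormedSpace.exp (t • genMat N dbar) (x + 1) y
          - NormedSpace.exp (t • genMat N dbar) x y|
      = Real.exp (-(a + b)) * ∑ y, |(P * Q) (x + 1) y - (P * Q) x y| := by
        simp only [hK, ← mul_sub, abs_mul, abs_of_pos (Real.exp_pos _), Finset.mul_sum]
    _ ≤ Real.exp (-(a + b)) * (Real.exp a / √a * Real.exp b) :=
        mul_le_mul_of_nonneg_left (hPQ.trans (mul_le_mul_of_nonneg_right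
          (sum_abs_exp_smul_shiftMat_apply_add_sub_le ha 1 x) (Real.exp_nonneg b)))
          (Real.exp_nonneg _)
    _ = √2 / (N * √t) := by
        rw [← hsqrt, div_mul_eq_mul_div, mul_div_assoc', ← Real.exp_add, ← Real.exp_add,
          show -(a + b) + (a + b) = 0 by ring, Real.exp_zero]
        have : 0 < √a := Real.sqrt_pos.mpr ha
        field_simp

theorem sum_abs_heatKer_add_intCast_sub_le (hN : 2 * |dbar| ≤ N) {S T : ℝ} (hST : S < T)
    (x : ZMod N) (ℓ : ℤ) :
    ∑ y, |heatKer N dbar S T (x + ℓ) y - heatKer N dbar S T x y|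
      ≤ |(ℓ : ℝ)| * (√2 / (N * √(T - S))) := by
  have hstep (z : ZMod N) : dist (WithLp.toLp 1 (heatKer N dbar S T (z + 1)))
      (WithLp.toLp 1 (heatKer N dbar S T z)) ≤ √2 / (N * √(T - S)) := by
    simpa only [heatKer, PiLp.dist_eq_of_L1, Real.dist_eq] using
      sum_abs_exp_smul_genMat_apply_add_one_sub_le hN (sub_pos.mpr hST) z
  simpa only [PiLp.dist_eq_of_L1, Real.dist_eq, zsmul_one] using
    dist_add_zsmul_le (F := fun z => WithLp.toLp 1 (heatKer N dbar S T z)) hstep ℓ x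

theorem continuous_heatKer (T : ℝ) (x y : ZMod N) :
    Continuous fun S => heatKer N dbar S T x y := by
  let : SeminormedRing (Matrix (ZMod N) (ZMod N) ℝ) := Matrix.linftyOpSemiNormedRing
  let : NormedRing (Matrix (ZMod N) (ZMod N) ℝ) := Matrix.linftyOpNormedRing
  let : NormedAlgebra ℝ (Matrix (ZMod N) (ZMod N) ℝ) := Matrix.linftyOpNormedAlgebra
  let : NormedAlgebra ℚ (Matrix (ZMod N) (ZMod N) ℝ) := Matrix.linftyOpNormedAlgebra
  have h1 : Continuous fun S : ℝ => (T - S) • genMat N dbar :=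
    (continuous_const.sub continuous_id).smul continuous_const
  have h2 : Continuous fun S : ℝ => NormedSpace.exp ((T - S) • genMat N dbar) :=
    NormedSpace.exp_continuous.comp h1
  exact (continuous_apply y).comp ((continuous_apply x).comp h2)

end HeatKernel

-- For `T < S₀` both sides vanish, as `x ^ (±1/2) = 0` and `√x = 0` for `x < 0`.
theorem integral_sub_rpow_neg_half (S₀ T : ℝ) :
    ∫ S in S₀..T, (T - S) ^ (-(1 / 2 : ℝ)) = 2 * √(T - S₀) := by
  rw [intervalIntegral.integral_comp_sub_left (fun u : ℝ => u ^ (-(1 / 2 : ℝ))), sub_self,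
    integral_rpow (Or.inl (by norm_num)), Real.zero_rpow (by norm_num), Real.sqrt_eq_rpow]
  norm_num
  ring

theorem abs_intervalIntegral_le_of_abs_le_mul_rpow_neg_half {f : ℝ → ℝ} {S₀ T c : ℝ}
    (hST : S₀ ≤ T) (hf : ∀ S ∈ Set.Ioo S₀ T, |f S| ≤ c * (T - S) ^ (-(1 / 2 : ℝ))) :
    |∫ S in S₀..T, f S| ≤ c * (2 * √(T - S₀)) := by
  have hae : ∀ᵐ S ∂volume, S ∈ Set.Ioc S₀ T → ‖f S‖ ≤ c * (T - S) ^ (-(1 / 2 : ℝ)) := by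
    filter_upwards [compl_mem_ae_iff.mpr (measure_singleton T)] with S hS hSI
    exact hf S ⟨hSI.1, lt_of_le_of_ne hSI.2 hS⟩
  have hint : IntervalIntegrable (fun S => c * (T - S) ^ (-(1 / 2 : ℝ))) volume S₀ T := by
    have := (intervalIntegral.intervalIntegrable_rpow' (a := 0) (b := T - S₀)
      (r := -(1 / 2 : ℝ)) (by norm_num)).comp_sub_left T
    rw [sub_sub_cancel, sub_zero] at this
    exact this.symm.const_mul c
  calc |∫ S in S₀..T, f S| ≤ ∫ S in S₀..T, c * (T - S) ^ (-(1 / 2 : ℝ)) :=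
        intervalIntegral.norm_integral_le_of_norm_le hST hae hint
    _ = c * (2 * √(T - S₀)) := by
        rw [intervalIntegral.integral_const_mul, integral_sub_rpow_neg_half]

section HeatOperator

variable {N : ℕ} [NeZero N] {dbar : ℝ} {ψ : ℝ → ZMod N → ℝ} {B S₀ T : ℝ}

theorem intervalIntegrable_sum_heatKer_mul (hψm : ∀ y, Measurable fun s => ψ s y)
    (hψ : ∀ s ∈ Set.Icc (0 : ℝ) 1, ∀ y, |ψ s y| ≤ B) (hS₀ : 0 ≤ S₀) (hST : S₀ ≤ T) (hT : T ≤ 1)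
    (x : ZMod N) :
    IntervalIntegrable (fun S => ∑ y, heatKer N dbar S T x y * ψ S y) volume S₀ T := by
  have h := IntervalIntegrable.sum (μ := volume) (a := S₀) (b := T) Finset.univ
    (f := fun y S => heatKer N dbar S T x y * ψ S y) fun y _ => ?_
  · simpa only [Finset.sum_fn] using h
  refine IntervalIntegrable.continuousOn_mul ?_ (continuous_heatKer T x y).continuousOn
  refine (intervalIntegrable_const (c := B)).mono_fun (hψm y).aestronglyMeasurable ?_
  rw [Set.uIoc_of_le hST]
  filter_upwards [ae_restrict_mem measurableSet_Ioc] with s hs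
  exact (hψ s ⟨hS₀.trans hs.1.le, hs.2.trans hT⟩ y).trans (le_abs_self B)

theorem abs_integral_heatKer_add_intCast_sub_le (hN : 2 * |dbar| ≤ N)
    (hψm : ∀ y, Measurable fun s => ψ s y) (hψ : ∀ s ∈ Set.Icc (0 : ℝ) 1, ∀ y, |ψ s y| ≤ B)
    (hS₀ : 0 ≤ S₀) (hST : S₀ ≤ T) (hT : T ≤ 1) (x : ZMod N) (ℓ : ℤ) :
    |(∫ S in S₀..T, ∑ y, heatKer N dbar S T (x + ℓ) y * ψ S y)
        - ∫ S in S₀..T, ∑ y, heatKer N dbar S T x y * ψ S y|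
      ≤ |(ℓ : ℝ)| * √2 / N * B * (2 * √(T - S₀)) := by
  rw [← intervalIntegral.integral_sub (intervalIntegrable_sum_heatKer_mul hψm hψ hS₀ hST hT _)
    (intervalIntegrable_sum_heatKer_mul hψm hψ hS₀ hST hT _)]
  refine abs_intervalIntegral_le_of_abs_le_mul_rpow_neg_half hST fun S hS => ?_
  have hψS : ∀ y, |ψ S y| ≤ B := hψ S ⟨hS₀.trans hS.1.le, hS.2.le.trans hT⟩
  have hTS : 0 < T - S := sub_pos.mpr hS.2
  calc |∑ y, heatKer N dbar S T (x + ℓ) y * ψ S y - ∑ y, heatKer N dbar S T x y * ψ S y|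
      = |∑ y, (heatKer N dbar S T (x + ℓ) y - heatKer N dbar S T x y) * ψ S y| := by
        simp only [sub_mul, Finset.sum_sub_distrib]
    _ ≤ ∑ y, |heatKer N dbar S T (x + ℓ) y - heatKer N dbar S T x y| * B :=
        (Finset.abs_sum_le_sum_abs _ _).trans <| Finset.sum_le_sum fun y _ => by
          rw [abs_mul]
          exact mul_le_mul_of_nonneg_left (hψS y) (abs_nonneg _)
    _ ≤ |(ℓ : ℝ)| * (√2 / (N * √(T - S))) * B := by
        rw [← Finset.sum_mul]
        exact mul_le_mul_of_nonneg_right (sum_abs_heatKer_add_intCast_sub_le hN hS.2 x ℓ)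
          ((abs_nonneg _).trans (hψS 0))
    _ = |(ℓ : ℝ)| * √2 / N * B * (T - S) ^ (-(1 / 2 : ℝ)) := by
        rw [Real.rpow_neg hTS.le, ← Real.sqrt_eq_rpow]
        field_simp

end HeatOperator

/-- normalized maximal spatial gradient (over `1 ≤ |ℓ| ≤ N^{1/2+ε_RN}`, acting on
the forward spatial variable) of the short-time heat operator
`G(T,x) = ∫_{max(T−N^{−1/2−999ε_RN},0)}^{T} Σ_y H^N_{S,T,x,y} N^{1/2} φ(S,y) Y(S,y) dS`
is bounded by `C N^{−3/4−(999/2)ε_RN+ε_ap}`. -/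
theorem stmt_14 (dbar : ℝ) :
    ∃ C : ℝ, ∀ (N : ℕ) [NeZero N], 2 * |dbar| ≤ (N : ℝ) →
      ∀ εap : ℝ, 0 < εap → εap ≤ ((999 : ℝ) ^ (999 : ℕ))⁻¹ * epsRN →
      ∀ φ Y : ℝ → ZMod N → ℝ,
        (∀ y : ZMod N, Measurable fun s => φ s y) →
        (∀ y : ZMod N, Measurable fun s => Y s y) →
        (∀ s ∈ Set.Icc (0:ℝ) 1, ∀ y : ZMod N, |φ s y| ≤ 1) →
        (∀ s ∈ Set.Icc (0:ℝ) 1, ∀ y : ZMod N, |Y s y| ≤ (N : ℝ) ^ εap) →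
      ∀ T ∈ Set.Icc (0:ℝ) 1, ∀ x : ZMod N,
      ∀ ℓ : ℤ, 1 ≤ |ℓ| → |(ℓ : ℝ)| ≤ (N : ℝ) ^ ((1:ℝ)/2 + epsRN) →
        |(ℓ : ℝ)|⁻¹ *
          |(∫ S in (max (T - (N : ℝ) ^ (-(1:ℝ)/2 - 999 * epsRN)) 0)..T,
              ∑ y : ZMod N, heatKer N dbar S T (x + (ℓ : ZMod N)) y *
                ((N : ℝ) ^ ((1:ℝ)/2) * φ S y * Y S y))
            - (∫ S in (max (T - (N : ℝ) ^ (-(1:ℝ)/2 - 999 * epsRN)) 0)..T,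
              ∑ y : ZMod N, heatKer N dbar S T x y *
                ((N : ℝ) ^ ((1:ℝ)/2) * φ S y * Y S y))|
          ≤ C * (N : ℝ) ^ (-(3:ℝ)/4 - 999/2 * epsRN + εap) := by
  refine ⟨2 * √2, fun N _ hN εap _ _ φ Y hφm hYm hφ hY T hT x ℓ hℓ _ => ?_⟩
  have hN0 : (0 : ℝ) < N := by exact_mod_cast Nat.pos_of_ne_zero (NeZero.ne N)
  set len := (N : ℝ) ^ (-(1 : ℝ) / 2 - 999 * epsRN) with hlen_def
  have hS₀T : max (T - len) 0 ≤ T := max_le (by linarith [show 0 < len by positivity]) hT.1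
  have hψ (s : ℝ) (hs : s ∈ Set.Icc (0 : ℝ) 1) (y : ZMod N) :
      |(N : ℝ) ^ ((1 : ℝ) / 2) * φ s y * Y s y| ≤ (N : ℝ) ^ ((1 : ℝ) / 2) * N ^ εap := by
    rw [abs_mul, abs_mul, abs_of_nonneg (by positivity), mul_assoc]
    gcongr
    simpa using mul_le_mul (hφ s hs y) (hY s hs y) (abs_nonneg _) zero_le_one
  have hdiff := abs_integral_heatKer_add_intCast_sub_le hN
    (ψ := fun s y => (N : ℝ) ^ ((1 : ℝ) / 2) * φ s y * Y s y)
    (fun y => (measurable_const.mul (hφm y)).mul (hYm y)) hψ (le_max_right _ _) hS₀T hT.2 x ℓ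
  have hwindow : √(T - max (T - len) 0) ≤ √len :=
    Real.sqrt_le_sqrt (by linarith [le_max_left (T - len) 0])
  have hℓ0 : (ℓ : ℝ) ≠ 0 := by exact_mod_cast abs_pos.mp (one_pos.trans_le hℓ)
  calc _ ≤ |(ℓ : ℝ)|⁻¹ * (|(ℓ : ℝ)| * √2 / N * ((N : ℝ) ^ ((1 : ℝ) / 2) * N ^ εap)
          * (2 * √len)) := by gcongr; exact hdiff.trans (by gcongr)
    _ = 2 * √2 * ((N : ℝ) ^ (-1 : ℝ) * N ^ ((1 : ℝ) / 2) * N ^ εap * len ^ ((1 : ℝ) / 2)) := by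
        rw [Real.rpow_neg_one, ← Real.sqrt_eq_rpow len]
        field_simp
    _ = 2 * √2 * (N : ℝ) ^ (-(3 : ℝ) / 4 - 999 / 2 * epsRN + εap) := by
        rw [hlen_def, ← Real.rpow_mul hN0.le, ← Real.rpow_add hN0, ← Real.rpow_add hN0,
          ← Real.rpow_add hN0]
        ring_nf
end
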